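/- arXiv:1509.00619 — 4 statements merged into one kernel-verified Lean document; each statement's English description precedes it below -/
import Mathlib

section
/- Let 𝒢 : G₀ ←φ₁ G₁ ←φ₂ G₂ ← ⋯ be a graph covering (each φₙ a +directional edge-surjective graph homomorphism between finite surjective directed graphs). Define V_𝒢 = { (v₀, v₁, ...) ∈ ∏ᵢ Vᵢ : vᵢ = φᵢ₊₁(vᵢ₊₁) for all i } and E_𝒢 = { (x, y) ∈ V_𝒢 × V_𝒢 : (xᵢ, yᵢ) ∈ Eᵢ for all i }. Then E_𝒢 is the graph of a function; that is, for each x ∈ V_𝒢 there is a unique y ∈ V_𝒢 with (x, y) ∈ E_𝒢. -/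
/-- A graph covering `G₀ ←φ₁ G₁ ←φ₂ G₂ ← ⋯` : a sequence of finite directed graphs
with surjective edge relations, `G₀` the singleton graph, and +directional
edge-surjective bonding graph homomorphisms. -/
structure GraphCovering where
  /-- vertex sets -/
  V : ℕ → Type
  fin : ∀ n, Fintype (V n)
  /-- edge relations -/
  E : ∀ n, V n → V n → Prop
  /-- `G₀` is a singleton graph -/
  singleV : ∀ a b : V 0, a = b
  /-- the edge relation is surjective: every vertex has an outgoing edge -/
  surjOut : ∀ n (v : V n), ∃ u, E n v u
  /-- every vertex has an incoming edge -/
  surjIn : ∀ n (v : V n), ∃ u, E n u v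
  /-- the bonding maps -/
  φ : ∀ n, V (n + 1) → V n
  /-- the bonding maps are graph homomorphisms -/
  hom : ∀ n u v, E (n + 1) u v → E n (φ n u) (φ n v)
  /-- the bonding maps are +directional -/
  plusdir : ∀ n u v v', E (n + 1) u v → E (n + 1) u v' → φ n v = φ n v'
  /-- the bonding maps are edge-surjective -/
  edgeSurj : ∀ n u v, E n u v → ∃ u' v', E (n + 1) u' v' ∧ φ n u' = u ∧ φ n v' = v

/-- The inverse limit `V_𝒢` of a graph covering. -/
def GraphCovering.limit (G : GraphCovering) : Type :=
  { x : ∀ n, G.V n // ∀ n, G.φ n (x (n + 1)) = x n }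

/-- The relation `E_𝒢` on the inverse limit. -/
def GraphCovering.rel (G : GraphCovering) (x y : G.limit) : Prop :=
  ∀ n, G.E n (x.1 n) (y.1 n)

instance (G : GraphCovering) (n : ℕ) : TopologicalSpace (G.V n) := ⊥
instance (G : GraphCovering) (n : ℕ) : DiscreteTopology (G.V n) := ⟨rfl⟩

instance (G : GraphCovering) : TopologicalSpace G.limit :=
  inferInstanceAs (TopologicalSpace { x : ∀ n, G.V n // ∀ n, G.φ n (x (n + 1)) = x n })

theorem rel_is_function_graph (G : GraphCovering) (x : G.limit) :
    ∃! y : G.limit, G.rel x y := by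
  classical
  -- f n : a chosen successor of x (n+1)
  let f : ∀ n, G.V (n + 1) := fun n => Classical.choose (G.surjOut (n + 1) (x.1 (n + 1)))
  have hf : ∀ n, G.E (n + 1) (x.1 (n + 1)) (f n) := fun n =>
    Classical.choose_spec (G.surjOut (n + 1) (x.1 (n + 1)))
  have hcompat : ∀ n, G.φ n (G.φ (n + 1) (f (n + 1))) = G.φ n (f n) := by
    intro n
    apply G.plusdir n (x.1 (n + 1))
    · have := G.hom (n + 1) (x.1 (n + 2)) (f (n + 1)) (hf (n + 1))
      rwa [x.2 (n + 1)] at this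
    · exact hf n
  refine ⟨⟨fun n => G.φ n (f n), fun n => hcompat n⟩, ?_, ?_⟩
  · intro n
    have := G.hom n (x.1 (n + 1)) (f n) (hf n)
    rwa [x.2 n] at this
  · intro y hy
    apply Subtype.ext
    funext n
    have h1 : G.E (n + 1) (x.1 (n + 1)) (y.1 (n + 1)) := hy (n + 1)
    have := G.plusdir n (x.1 (n + 1)) (y.1 (n + 1)) (f n) h1 (hf n)
    rw [y.2 n] at this
    exact this
end

section
/- Let 𝒢 be a graph covering in which every bonding map φₙ is bidirectional. Then the induced map f on the inverse limit X = V_𝒢 is a homeomorphism. -/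
theorem limit_system_homeomorph_of_bidirectional (G : GraphCovering)
    (hbi : ∀ n u u' v, G.E (n + 1) u v → G.E (n + 1) u' v → G.φ n u = G.φ n u')
    (f : G.limit → G.limit) (hf : ∀ x, G.rel x (f x)) :
    IsHomeomorph f := by
  haveI : ∀ n, Finite (G.V n) := fun n => @Finite.of_fintype _ (G.fin n)
  -- compactness of the limit
  have hclosed : IsClosed {x : ∀ n, G.V n | ∀ n, G.φ n (x (n + 1)) = x n} := by
    have : {x : ∀ n, G.V n | ∀ n, G.φ n (x (n + 1)) = x n}
        = ⋂ n, {x : ∀ n, G.V n | G.φ n (x (n + 1)) = x n} := by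
      ext x; simp
    rw [this]
    refine isClosed_iInter fun n => isClosed_eq ?_ (continuous_apply n)
    exact (continuous_of_discreteTopology (f := G.φ n)).comp (continuous_apply (n + 1))
  haveI : CompactSpace G.limit :=
    isCompact_iff_compactSpace.mp hclosed.isCompact
  haveI : T2Space G.limit :=
    inferInstanceAs (T2Space { x : ∀ n, G.V n // ∀ n, G.φ n (x (n + 1)) = x n })
  -- uniqueness of the successor under rel
  have uniq : ∀ x y y' : G.limit, G.rel x y → G.rel x y' → y = y' := by
    rintro x ⟨y, hy⟩ ⟨y', hy'⟩ h h'
    refine Subtype.ext (funext fun n => ?_)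
    have := G.plusdir n (x.1 (n + 1)) (y (n + 1)) (y' (n + 1)) (h (n + 1)) (h' (n + 1))
    rw [hy n] at this; rw [hy' n] at this; exact this
  rw [isHomeomorph_iff_continuous_bijective]
  constructor
  · -- continuity
    have key : ∀ (x : G.limit) n,
        (f x).1 n = G.φ n (Classical.choose (G.surjOut (n + 1) (x.1 (n + 1)))) := by
      intro x n
      have h1 := Classical.choose_spec (G.surjOut (n + 1) (x.1 (n + 1)))
      have h2 := hf x (n + 1)
      have := G.plusdir n (x.1 (n + 1)) ((f x).1 (n + 1)) _ h2 h1
      rw [(f x).2 n] at this; exact this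
    apply Continuous.subtype_mk
    refine continuous_pi fun n => ?_
    have : (fun x : G.limit => (f x).1 n)
        = fun x : G.limit => G.φ n (Classical.choose (G.surjOut (n + 1) (x.1 (n + 1)))) :=
      funext fun x => key x n
    rw [this]
    exact (continuous_of_discreteTopology
        (f := fun u : G.V (n + 1) => G.φ n (Classical.choose (G.surjOut (n + 1) u)))).comp
      ((continuous_apply (n + 1)).comp continuous_subtype_val)
  · constructor
    · -- injective
      intro x x' hxx'
      refine Subtype.ext (funext fun n => ?_)
      have h1 := hf x (n + 1)
      have h2 := hf x' (n + 1)
      rw [hxx'] at h1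
      have := hbi n (x.1 (n + 1)) (x'.1 (n + 1)) _ h1 h2
      rw [x.2 n, x'.2 n] at this; exact this
    · -- surjective
      intro y
      set xf : ∀ n, G.V n :=
        fun n => G.φ n (Classical.choose (G.surjIn (n + 1) (y.1 (n + 1)))) with hxf
      have hspec : ∀ n, G.E (n + 1) (Classical.choose (G.surjIn (n + 1) (y.1 (n + 1)))) (y.1 (n + 1)) :=
        fun n => Classical.choose_spec (G.surjIn (n + 1) (y.1 (n + 1)))
      have hedge : ∀ n, G.E (n + 1) (xf (n + 1)) (y.1 (n + 1)) := by
        intro n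
        have := G.hom (n + 1) _ _ (hspec (n + 1))
        rw [y.2 (n + 1)] at this
        exact this
      have hx : ∀ n, G.φ n (xf (n + 1)) = xf n := by
        intro n
        exact hbi n (xf (n + 1)) (Classical.choose (G.surjIn (n + 1) (y.1 (n + 1)))) _
          (hedge n) (hspec n)
      refine ⟨⟨xf, hx⟩, ?_⟩
      refine uniq ⟨xf, hx⟩ _ y (hf _) ?_
      intro n
      have := G.hom n _ _ (hspec n)
      rw [y.2 n] at this
      exact this
end

section
/- Let 𝒢 be a graph covering with inverse limit system (X, f). Then (X, f) is chain transitive if and only if Gₙ is irreducible for every n ≥ 1. -/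
/-- A directed graph is irreducible if any vertex can be reached from any other
by a walk. -/
def GraphIrreducible {V : Type*} (E : V → V → Prop) : Prop :=
  ∀ u v : V, ∃ w : List V, w ≠ [] ∧ w.Chain' E ∧ w.head? = some u ∧ w.getLast? = some v

/-!
The coordinate maps `x ↦ xₙ` from the compact inverse limit onto the finite discrete graphs `Gₙ`
are uniformly locally constant for any compatible metric, and conversely points agreeing at a
deep enough level `N` are `ε`-close. Hence an `ε`-chain for small `ε` projects to a walk in `Gₙ`.
Conversely a walk in `G_{N+1}` lifts to an `ε`-chain: if `c_{N+1} → d_{N+1}` is an edge, then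
`d_{N+1}` and `f(c)_{N+1}` are both out-neighbours of `c_{N+1}`, so by `+`-directionality
`f(c)` and `d` agree at level `N`.
-/

open Relation Topology

theorem graphIrreducible_iff_reflTransGen {V : Type*} {E : V → V → Prop} :
    GraphIrreducible E ↔ ∀ u v, ReflTransGen E u v := by
  refine ⟨fun h u v => ?_, fun h u v => ?_⟩
  · obtain ⟨w, hne, hw, hu, hv⟩ := h u v
    rw [List.head?_eq_some_head hne, Option.some_inj] at hu
    rw [List.getLast?_eq_some_getLast hne, Option.some_inj] at hv
    exact hu ▸ hv ▸ List.relationReflTransGen_of_exists_isChain w hw hne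
  · obtain ⟨w, hne, hw, hu, hv⟩ := List.exists_isChain_ne_nil_of_relationReflTransGen (h u v)
    exact ⟨w, hne, hw, by rw [List.head?_eq_some_head hne, hu], by
      rw [List.getLast?_eq_some_getLast hne, hv]⟩

theorem Relation.reflTransGen_iff_exists_seq {α : Type*} {r : α → α → Prop} {a b : α} :
    ReflTransGen r a b ↔
      ∃ (l : ℕ) (c : ℕ → α), c 0 = a ∧ c l = b ∧ ∀ i < l, r (c i) (c (i + 1)) := by
  refine ⟨fun h => ?_, fun ⟨l, c, ha, hb, hc⟩ => ?_⟩
  · induction h with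
    | refl => exact ⟨0, fun _ => a, rfl, rfl, by simp⟩
    | @tail _ d _ hbc ih =>
      obtain ⟨l, c, ha, hb, hc⟩ := ih
      refine ⟨l + 1, fun i => if i ≤ l then c i else d, by simpa using ha, by simp, fun i hi => ?_⟩
      rcases Nat.lt_succ_iff_lt_or_eq.mp hi with hi | rfl
      · simpa [hi.le, Nat.succ_le_of_lt hi] using hc i hi
      · simpa [hb] using hbc
  · subst ha hb
    exact ReflTransGen.lift c (fun i j (h : j = i + 1 ∧ i < l) => h.1 ▸ hc i h.2) 0 l
      (reflTransGen_of_succ_of_le _ (fun i hi => ⟨rfl, hi.2⟩) l.zero_le)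

theorem Relation.TransGen.comap_of_surjective {α β : Type*} {r : β → β → Prop} {p : α → β}
    (hp : Function.Surjective p) {a b : α} (h : TransGen r (p a) (p b)) :
    TransGen (fun x y => r (p x) (p y)) a b := by
  suffices ∀ c, TransGen r (p a) c → ∀ b, p b = c → TransGen (fun x y => r (p x) (p y)) a b from
    this _ h b rfl
  intro c hc
  induction hc with
  | single hac => exact fun b hb => .single (hb ▸ hac)
  | @tail c _ _ hcd ih =>
    obtain ⟨c', rfl⟩ := hp c
    exact fun b hb => (ih c' rfl).tail (hb ▸ hcd)

theorem exists_seq_compatible_eq {V : ℕ → Type*} {φ : ∀ n, V (n + 1) → V n}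
    (hφ : ∀ n, Function.Surjective (φ n)) (n : ℕ) (v : V n) :
    ∃ x : ∀ j, V j, (∀ j, φ j (x (j + 1)) = x j) ∧ x n = v := by
  induction n generalizing V with
  | zero =>
    refine ⟨fun j => Nat.rec (motive := V) v (fun j => Function.surjInv (hφ j)) j,
      fun j => Function.surjInv_eq (hφ j) _, rfl⟩
  | succ n ih =>
    obtain ⟨x, hx, hxn⟩ := ih (V := fun j => V (j + 1)) (fun j => hφ (j + 1)) v
    refine ⟨fun j => Nat.casesOn (motive := V) j (φ 0 (x 0)) x, fun j => ?_, hxn⟩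
    cases j with
    | zero => rfl
    | succ j => exact hx j

theorem exists_pos_forall_dist_lt_imp_eq {X D : Type*} [MetricSpace X] [CompactSpace X]
    [TopologicalSpace D] [DiscreteTopology D] {p : X → D} (hp : Continuous p) :
    ∃ δ > 0, ∀ a b, dist a b < δ → p a = p b := by
  have hopen : IsOpen {q : X × X | p q.1 = p q.2} :=
    (isOpen_discrete {z : D × D | z.1 = z.2}).preimage
      ((hp.comp continuous_fst).prodMk (hp.comp continuous_snd))
  have hmem : {q : X × X | p q.1 = p q.2} ∈ uniformity X := by
    rw [← nhdsSet_diagonal_eq_uniformity]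
    exact hopen.mem_nhdsSet.mpr fun q (hq : q.1 = q.2) => congrArg p hq
  obtain ⟨δ, hδ, h⟩ := Metric.mem_uniformity_dist.mp hmem
  exact ⟨δ, hδ, fun a b hab => h hab⟩

theorem exists_forall_eq_imp_dist_lt {X : Type*} {D : ℕ → Type*} [MetricSpace X]
    [CompactSpace X] [∀ n, TopologicalSpace (D n)] [∀ n, T2Space (D n)] {p : ∀ n, X → D n}
    (hp : ∀ n, Continuous (p n)) (hsep : ∀ a b, (∀ n, p n a = p n b) → a = b)
    (hmono : ∀ n a b, p (n + 1) a = p (n + 1) b → p n a = p n b) {ε : ℝ} (hε : 0 < ε) :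
    ∃ N, ∀ a b, p N a = p N b → dist a b < ε := by
  let A : ℕ → Set (X × X) := fun n => {q | p n q.1 = p n q.2}
  have hA : Antitone A := antitone_nat_of_succ_le fun n q => hmono n q.1 q.2
  have hclosed (n : ℕ) : IsClosed (A n) :=
    isClosed_eq ((hp n).comp continuous_fst) ((hp n).comp continuous_snd)
  obtain ⟨N, hN⟩ := exists_subset_nhds_of_compactSpace hA.directed_ge hclosed
    (U := {q | dist q.1 q.2 < ε}) fun q hq => by
      have : q.1 = q.2 := hsep _ _ fun n => Set.mem_iInter.mp hq n
      exact (isOpen_lt continuous_dist continuous_const).mem_nhds (by simp [this, hε])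
  exact ⟨N, fun a b h => hN (show (a, b) ∈ A N from h)⟩

namespace GraphCovering

variable (G : GraphCovering)

theorem φ_surjective (n : ℕ) : Function.Surjective (G.φ n) := fun v => by
  obtain ⟨u, huv⟩ := G.surjIn n v
  obtain ⟨-, v', -, -, hv'⟩ := G.edgeSurj n u v huv
  exact ⟨v', hv'⟩

theorem coord_surjective (n : ℕ) : Function.Surjective fun x : G.limit => x.1 n := fun v =>
  let ⟨x, hx, hxn⟩ := exists_seq_compatible_eq G.φ_surjective n v
  ⟨⟨x, hx⟩, hxn⟩

theorem continuous_coord (n : ℕ) : Continuous fun x : G.limit => x.1 n :=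
  (continuous_apply n).comp continuous_subtype_val

instance compactSpace_limit : CompactSpace G.limit := by
  have := G.fin
  have hclosed : IsClosed {x : ∀ n, G.V n | ∀ n, G.φ n (x (n + 1)) = x n} := by
    rw [Set.ofPred_forall]
    exact isClosed_iInter fun n =>
      isClosed_eq (continuous_of_discreteTopology.comp (continuous_apply _)) (continuous_apply n)
  exact isCompact_iff_compactSpace.mp hclosed.isCompact

variable {G}

theorem coord_eq_of_coord_succ_eq {x y : G.limit} {n : ℕ} (h : x.1 (n + 1) = y.1 (n + 1)) :
    x.1 n = y.1 n := by
  rw [← x.2 n, ← y.2 n, h]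

theorem coord_eq_of_rel_of_edge {x y z : G.limit} {n : ℕ} (hxy : G.rel x y)
    (hxz : G.E (n + 1) (x.1 (n + 1)) (z.1 (n + 1))) : y.1 n = z.1 n := by
  rw [← y.2 n, ← z.2 n]
  exact G.plusdir n _ _ _ (hxy (n + 1)) hxz

end GraphCovering

theorem chain_transitive_iff_irreducible (G : GraphCovering)
    (m : MetricSpace G.limit)
    (hm : m.toUniformSpace.toTopologicalSpace =
      (inferInstance : TopologicalSpace G.limit))
    (f : G.limit → G.limit) (hf : ∀ x, G.rel x (f x)) :
    (∀ ε > (0 : ℝ), ∀ x y : G.limit, ∃ (l : ℕ) (c : ℕ → G.limit),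
        c 0 = x ∧ c l = y ∧ ∀ i < l, m.dist (f (c i)) (c (i + 1)) < ε) ↔
      (∀ n ≥ 1, GraphIrreducible (G.E n)) := by
  have : @CompactSpace G.limit m.toUniformSpace.toTopologicalSpace := hm ▸ G.compactSpace_limit
  have hcont (n : ℕ) : Continuous[m.toUniformSpace.toTopologicalSpace, _] (·.1 n : G.limit → _) :=
    hm ▸ G.continuous_coord n
  refine ⟨fun hct n _ => graphIrreducible_iff_reflTransGen.mpr fun u v => ?_,
    fun hirr ε hε x y => (reflTransGen_iff_exists_seq (r := fun a b => dist (f a) b < ε)).mp ?_⟩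
  · obtain ⟨δ, hδ, hδn⟩ := exists_pos_forall_dist_lt_imp_eq (X := G.limit) (hcont n)
    obtain ⟨x, rfl⟩ := G.coord_surjective n u
    obtain ⟨y, rfl⟩ := G.coord_surjective n v
    refine ReflTransGen.lift (fun a : G.limit => a.1 n) (fun a b hab => ?_) x y
      (reflTransGen_iff_exists_seq (r := fun a b => dist (f a) b < δ) |>.mpr (hct δ hδ x y))
    change G.E n (a.1 n) (b.1 n)
    exact hδn _ _ hab ▸ hf a n
  · obtain ⟨N, hN⟩ := exists_forall_eq_imp_dist_lt (X := G.limit) hcont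
      (fun _ _ h => Subtype.ext (funext h))
      (fun _ _ _ => GraphCovering.coord_eq_of_coord_succ_eq) hε
    have hpath : TransGen (G.E (N + 1)) (x.1 (N + 1)) (y.1 (N + 1)) :=
      .head' (hf x (N + 1)) (graphIrreducible_iff_reflTransGen.mp (hirr (N + 1) N.succ_pos) _ _)
    refine (TransGen.mono (fun a b hab => ?_) _ _
      (hpath.comap_of_surjective (G.coord_surjective (N + 1)))).to_reflTransGen
    exact hN _ _ (GraphCovering.coord_eq_of_rel_of_edge (hf a) hab)
end

section
/- Let 𝒢 be a graph covering with inverse limit (X, f). Suppose x = (v₀, v₁, v₂, ...) ∈ X is such that for all sufficiently large n, every two edges of Gₙ into vₙ have the same φₙ-image of their sources and every two edges out of vₙ have the same φₙ-image of their targets (vₙ is a bidirectional vertex). Then x has a unique preimage under f. -/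
/-
For existence, the in-neighbours of the coordinates `x n` form an inverse system of nonempty
finite sets under the bonding maps (each `φ n` is a graph homomorphism), so König's lemma gives a
compatible thread, i.e. a point `y` with `y → x`. For uniqueness, if `y → x` and `y' → x` then
`y (n + 1)` and `y' (n + 1)` are in-neighbours of the bidirectional vertex `x (n + 1)`, so
`y n = y' n` for all large `n`; the bonding maps then force agreement at every level.
-/

open CategoryTheory

theorem exists_compatible_seq_of_finite {S : ℕ → Type*} [∀ n, Finite (S n)]
    [∀ n, Nonempty (S n)] (f : ∀ n, S (n + 1) → S n) :
    ∃ s : ∀ n, S n, ∀ n, f n (s (n + 1)) = s n := by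
  let F : ℕᵒᵖ ⥤ Type _ := Functor.ofOpSequence fun n => TypeCat.ofHom (f n)
  have : ∀ j : ℕᵒᵖ, Finite (F.obj j) := fun j => inferInstanceAs (Finite (S j.unop))
  have : ∀ j : ℕᵒᵖ, Nonempty (F.obj j) := fun j => inferInstanceAs (Nonempty (S j.unop))
  obtain ⟨s, hs⟩ := nonempty_sections_of_finite_inverse_system F
  refine ⟨fun n => s (.op n), fun n => ?_⟩
  have h := hs (homOfLE (Nat.le_add_right n 1)).op
  rwa [Functor.ofOpSequence_map_homOfLE_succ] at h

namespace GraphCovering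

variable {G : GraphCovering}

theorem limit.coord_eq_of_coord_eq_of_le {y y' : G.limit} {m n : ℕ} (hmn : m ≤ n)
    (h : y.1 n = y'.1 n) : y.1 m = y'.1 m := by
  induction n, hmn using Nat.le_induction with
  | base => exact h
  | succ n _ ih => exact ih (by rw [← y.2 n, ← y'.2 n, h])

theorem limit.ext_of_forall_ge {y y' : G.limit} (N : ℕ) (h : ∀ n ≥ N, y.1 n = y'.1 n) :
    y = y' :=
  Subtype.ext <| funext fun n =>
    limit.coord_eq_of_coord_eq_of_le (Nat.le_add_right n N) (h _ (Nat.le_add_left N n))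

theorem exists_rel (x : G.limit) : ∃ y, G.rel y x := by
  have := G.fin
  have : ∀ n, Nonempty {u // G.E n u (x.1 n)} := fun n =>
    let ⟨u, hu⟩ := G.surjIn n (x.1 n); ⟨⟨u, hu⟩⟩
  obtain ⟨s, hs⟩ := exists_compatible_seq_of_finite (S := fun n => {u // G.E n u (x.1 n)})
    fun n u => ⟨G.φ n u.1, by simpa only [x.2 n] using G.hom n _ _ u.2⟩
  exact ⟨⟨fun n => (s n).1, fun n => congrArg Subtype.val (hs n)⟩, fun n => (s n).2⟩

theorem eq_of_rel_of_eventually_in_bidirectional {x : G.limit} (N : ℕ)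
    (hin : ∀ n ≥ N, ∀ u u', G.E (n + 1) u (x.1 (n + 1)) → G.E (n + 1) u' (x.1 (n + 1)) →
      G.φ n u = G.φ n u')
    {y y' : G.limit} (hy : G.rel y x) (hy' : G.rel y' x) : y = y' :=
  limit.ext_of_forall_ge N fun n hn => by
    rw [← y.2 n, ← y'.2 n]
    exact hin n hn _ _ (hy (n + 1)) (hy' (n + 1))

end GraphCovering

theorem unique_preimage_of_eventually_bidirectional_vertices (G : GraphCovering)
    (x : G.limit)
    (hbi : ∃ N : ℕ, ∀ n ≥ N,
      (∀ u u', G.E (n + 1) u (x.1 (n + 1)) → G.E (n + 1) u' (x.1 (n + 1)) →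
        G.φ n u = G.φ n u') ∧
      (∀ w w', G.E (n + 1) (x.1 (n + 1)) w → G.E (n + 1) (x.1 (n + 1)) w' →
        G.φ n w = G.φ n w')) :
    ∃! y : G.limit, G.rel y x := by
  obtain ⟨N, hN⟩ := hbi
  obtain ⟨y, hy⟩ := G.exists_rel x
  exact ⟨y, hy, fun y' hy' =>
    GraphCovering.eq_of_rel_of_eventually_in_bidirectional N (fun n hn => (hN n hn).1) hy' hy⟩
end
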